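/- Suppose π^M is a least favorable prior for the prior disclosure game with Bayes rule δ^M, and a Bayesimax prior exists. Then every Bayesimax prior π* is least favorable, and the constant rule δ*(x) ≡ π* is minimax: sup_θ ℛ_S(δ*, θ) = inf_δ sup_θ ℛ_S(δ, θ). -/

import Mathlib

open Finset

/-- `p` is a probability mass function on the finite set `Ω`. -/
def IsPMF {Ω : Type*} [Fintype Ω] (p : Ω → ℝ) : Prop :=
  (∀ a, 0 ≤ p a) ∧ ∑ a, p a = 1

/-- A scoring rule `S` on pmfs over `Ω` is strictly proper. -/
def StrictlyProper {Ω : Type*} [Fintype Ω] (S : (Ω → ℝ) → Ω → ℝ) : Prop :=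
  ∀ p q : Ω → ℝ, IsPMF p → IsPMF q →
    (∑ y, p y * S q y ≤ ∑ y, p y * S p y) ∧
    ((∑ y, p y * S q y = ∑ y, p y * S p y) → q = p)

/-- Prior predictive (marginal) distribution of the data. -/
noncomputable def priorPred {Ω 𝒳 : Type*} [Fintype Ω]
    (P : Ω → 𝒳 → ℝ) (π : Ω → ℝ) (x : 𝒳) : ℝ :=
  ∑ θ, π θ * P θ x

/-- Posterior distribution over `Ω` given `X = x`, under prior `a`. -/
noncomputable def post {Ω 𝒳 : Type*} [Fintype Ω]
    (P : Ω → 𝒳 → ℝ) (a : Ω → ℝ) (x : 𝒳) (θ : Ω) : ℝ :=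
  a θ * P θ x / priorPred P a x

/-- Frequentist risk of decision rule `δ` at `θ` in the prior disclosure game. -/
noncomputable def freqRisk {Ω 𝒳 : Type*} [Fintype Ω] [Fintype 𝒳]
    (S : (Ω → ℝ) → Ω → ℝ) (P : Ω → 𝒳 → ℝ) (δ : 𝒳 → Ω → ℝ) (θ : Ω) : ℝ :=
  ∑ x, P θ x * (-(S (post P (δ x) x) θ))

/-- Bayes risk of decision rule `δ` under prior `π` in the prior disclosure game. -/
noncomputable def bayesRisk {Ω 𝒳 : Type*} [Fintype Ω] [Fintype 𝒳]
    (S : (Ω → ℝ) → Ω → ℝ) (P : Ω → 𝒳 → ℝ) (δ : 𝒳 → Ω → ℝ) (π : Ω → ℝ) : ℝ :=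
  ∑ θ, π θ * freqRisk S P δ θ

/-- Minimum Bayes risk over all (pmf-valued) decision rules. -/
noncomputable def minBayesRisk {Ω 𝒳 : Type*} [Fintype Ω] [Fintype 𝒳]
    (S : (Ω → ℝ) → Ω → ℝ) (P : Ω → 𝒳 → ℝ) (π : Ω → ℝ) : ℝ :=
  sInf {r | ∃ δ : 𝒳 → Ω → ℝ, (∀ x, IsPMF (δ x)) ∧ r = bayesRisk S P δ π}

/-- Generalized entropy associated with the scoring rule `S`. -/
noncomputable def genEntropy {Ω : Type*} [Fintype Ω]
    (S : (Ω → ℝ) → Ω → ℝ) (p : Ω → ℝ) : ℝ :=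
  -∑ y, p y * S p y

/-- Score divergence associated with the scoring rule `S`. -/
noncomputable def scoreDiv {Ω : Type*} [Fintype Ω]
    (S : (Ω → ℝ) → Ω → ℝ) (p q : Ω → ℝ) : ℝ :=
  ∑ y, p y * (S p y - S q y)

/-! The least favorable rule `δM` has frequentist risk at most `r(πM) ≤ r(π*)` everywhere, so its
Bayes risk under `π*` is at most `r(π*)`: `δM` is Bayes for `π*`. Since `S` is strictly proper,
a Bayes rule under `π*` reports the posterior of `π*` at every `x`, so the constant rule `π*`
has the same risk function as `δM` and is least favorable too. A rule whose risk never exceeds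
a minimum Bayes risk is minimax, because every rule's worst-case risk dominates its Bayes risk. -/

section PriorDisclosure

variable {Ω 𝒳 : Type*} [Fintype Ω]

lemma IsPMF.exists_pos {p : Ω → ℝ} (hp : IsPMF p) : ∃ a, 0 < p a := by
  by_contra! h
  have hzero : ∑ a, p a = 0 := sum_eq_zero fun a _ => le_antisymm (h a) (hp.1 a)
  simp [hp.2] at hzero

lemma priorPred_pos {P : Ω → 𝒳 → ℝ} (hPpos : ∀ θ x, 0 < P θ x) {π : Ω → ℝ} (hπ : IsPMF π)
    (x : 𝒳) : 0 < priorPred P π x := by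
  obtain ⟨θ, hθ⟩ := hπ.exists_pos
  exact sum_pos' (fun θ _ => mul_nonneg (hπ.1 θ) (hPpos θ x).le)
    ⟨θ, mem_univ _, mul_pos hθ (hPpos θ x)⟩

lemma isPMF_post {P : Ω → 𝒳 → ℝ} (hPpos : ∀ θ x, 0 < P θ x) {π : Ω → ℝ} (hπ : IsPMF π)
    (x : 𝒳) : IsPMF (post P π x) := by
  have hpred := priorPred_pos hPpos hπ x
  refine ⟨fun θ => div_nonneg (mul_nonneg (hπ.1 θ) (hPpos θ x).le) hpred.le, ?_⟩
  simp only [post]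
  rw [← sum_div]
  exact div_self hpred.ne'

lemma mul_eq_priorPred_mul_post {P : Ω → 𝒳 → ℝ} (hPpos : ∀ θ x, 0 < P θ x) {π : Ω → ℝ}
    (hπ : IsPMF π) (x : 𝒳) (θ : Ω) : π θ * P θ x = priorPred P π x * post P π x θ := by
  unfold post
  rw [mul_div_cancel₀ _ (priorPred_pos hPpos hπ x).ne']

variable {S : (Ω → ℝ) → Ω → ℝ} {P : Ω → 𝒳 → ℝ} {π : Ω → ℝ} {δ : 𝒳 → Ω → ℝ}

lemma priorPred_mul_expected_score_le (hS : StrictlyProper S) (hPpos : ∀ θ x, 0 < P θ x)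
    (hπ : IsPMF π) (hδ : ∀ x, IsPMF (δ x)) (x : 𝒳) :
    priorPred P π x * ∑ θ, post P π x θ * S (post P (δ x) x) θ ≤
      priorPred P π x * ∑ θ, post P π x θ * S (post P π x) θ :=
  mul_le_mul_of_nonneg_left (hS _ _ (isPMF_post hPpos hπ x) (isPMF_post hPpos (hδ x) x)).1
    (priorPred_pos hPpos hπ x).le

variable [Fintype 𝒳]

lemma freqRisk_congr {δ' : 𝒳 → Ω → ℝ} (h : ∀ x, post P (δ x) x = post P (δ' x) x) :
    freqRisk S P δ = freqRisk S P δ' :=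
  funext fun _ => sum_congr rfl fun x _ => by rw [h x]

lemma bayesRisk_le_of_forall_freqRisk_le (hπ : IsPMF π) {c : ℝ}
    (h : ∀ θ, freqRisk S P δ θ ≤ c) : bayesRisk S P δ π ≤ c :=
  calc bayesRisk S P δ π ≤ ∑ θ, π θ * c :=
        sum_le_sum fun θ _ => mul_le_mul_of_nonneg_left (h θ) (hπ.1 θ)
    _ = c := by rw [← sum_mul, hπ.2, one_mul]

lemma bayesRisk_eq_neg_sum_priorPred_mul (hPpos : ∀ θ x, 0 < P θ x) (hπ : IsPMF π) :
    bayesRisk S P δ π =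
      -∑ x, priorPred P π x * ∑ θ, post P π x θ * S (post P (δ x) x) θ := by
  simp only [bayesRisk, freqRisk, mul_sum]
  rw [sum_comm, ← sum_neg_distrib]
  refine sum_congr rfl fun x _ => ?_
  rw [← sum_neg_distrib]
  refine sum_congr rfl fun θ _ => ?_
  rw [← mul_assoc, ← mul_assoc, ← mul_eq_priorPred_mul_post hPpos hπ x θ]
  ring

lemma bayesRisk_const_le (hS : StrictlyProper S) (hPpos : ∀ θ x, 0 < P θ x) (hπ : IsPMF π)
    (hδ : ∀ x, IsPMF (δ x)) : bayesRisk S P (fun _ => π) π ≤ bayesRisk S P δ π := by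
  rw [bayesRisk_eq_neg_sum_priorPred_mul hPpos hπ, bayesRisk_eq_neg_sum_priorPred_mul hPpos hπ]
  exact neg_le_neg (sum_le_sum fun x _ => priorPred_mul_expected_score_le hS hPpos hπ hδ x)

lemma post_eq_of_bayesRisk_eq (hS : StrictlyProper S) (hPpos : ∀ θ x, 0 < P θ x)
    (hπ : IsPMF π) (hδ : ∀ x, IsPMF (δ x))
    (h : bayesRisk S P δ π = bayesRisk S P (fun _ => π) π) (x : 𝒳) :
    post P (δ x) x = post P π x := by
  rw [bayesRisk_eq_neg_sum_priorPred_mul hPpos hπ, bayesRisk_eq_neg_sum_priorPred_mul hPpos hπ,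
    neg_inj] at h
  have hx := (sum_eq_sum_iff_of_le fun x _ =>
    priorPred_mul_expected_score_le hS hPpos hπ hδ x).1 h x (mem_univ x)
  exact (hS _ _ (isPMF_post hPpos hπ x) (isPMF_post hPpos (hδ x) x)).2
    (mul_left_cancel₀ (priorPred_pos hPpos hπ x).ne' hx)

lemma minBayesRisk_eq_bayesRisk_const (hS : StrictlyProper S) (hPpos : ∀ θ x, 0 < P θ x)
    (hπ : IsPMF π) : minBayesRisk S P π = bayesRisk S P (fun _ => π) π := by
  refine IsLeast.csInf_eq ⟨⟨fun _ => π, fun _ => hπ, rfl⟩, ?_⟩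
  rintro _ ⟨δ, hδ, rfl⟩
  exact bayesRisk_const_le hS hPpos hπ hδ

lemma minBayesRisk_le_bayesRisk (hS : StrictlyProper S) (hPpos : ∀ θ x, 0 < P θ x)
    (hπ : IsPMF π) (hδ : ∀ x, IsPMF (δ x)) : minBayesRisk S P π ≤ bayesRisk S P δ π :=
  (minBayesRisk_eq_bayesRisk_const hS hPpos hπ).trans_le (bayesRisk_const_le hS hPpos hπ hδ)

lemma iSup_freqRisk_eq_sInf_of_freqRisk_le_minBayesRisk [Nonempty Ω] (hS : StrictlyProper S)
    (hPpos : ∀ θ x, 0 < P θ x) (hπ : IsPMF π) {δ₀ : 𝒳 → Ω → ℝ} (hδ₀ : ∀ x, IsPMF (δ₀ x))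
    (h : ∀ θ, freqRisk S P δ₀ θ ≤ minBayesRisk S P π) :
    (⨆ θ, freqRisk S P δ₀ θ) =
      sInf {v | ∃ δ : 𝒳 → Ω → ℝ, (∀ x, IsPMF (δ x)) ∧ v = ⨆ θ, freqRisk S P δ θ} := by
  refine (IsLeast.csInf_eq ?_).symm
  refine ⟨⟨δ₀, hδ₀, rfl⟩, ?_⟩
  rintro _ ⟨δ, hδ, rfl⟩
  calc (⨆ θ, freqRisk S P δ₀ θ) ≤ minBayesRisk S P π := ciSup_le h
    _ ≤ bayesRisk S P δ π := minBayesRisk_le_bayesRisk hS hPpos hπ hδ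
    _ ≤ ⨆ θ, freqRisk S P δ θ :=
      bayesRisk_le_of_forall_freqRisk_le hπ (le_ciSup (Set.finite_range _).bddAbove)

end PriorDisclosure

theorem bayesimax_is_least_favorable_and_minimax_general
    {Ω 𝒳 : Type*} [Fintype Ω] [Fintype 𝒳] [Nonempty Ω]
    (S : (Ω → ℝ) → Ω → ℝ) (hS : StrictlyProper S)
    (P : Ω → 𝒳 → ℝ) (hPpos : ∀ θ x, 0 < P θ x)
    (πM : Ω → ℝ) (hπM : IsPMF πM)
    (δM : 𝒳 → Ω → ℝ) (hδM : ∀ x, IsPMF (δM x))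
    (hLF : ∀ θ, freqRisk S P δM θ ≤ minBayesRisk S P πM)
    (πstar : Ω → ℝ) (hπstar : IsPMF πstar)
    (hmax : ∀ π : Ω → ℝ, IsPMF π → minBayesRisk S P π ≤ minBayesRisk S P πstar) :
    (∀ θ, freqRisk S P (fun _ => πstar) θ ≤ minBayesRisk S P πstar) ∧
      (⨆ θ, freqRisk S P (fun _ => πstar) θ)
        = sInf {v | ∃ δ : 𝒳 → Ω → ℝ, (∀ x, IsPMF (δ x)) ∧
            v = ⨆ θ, freqRisk S P δ θ} := by
  have hδM_bayes : bayesRisk S P δM πstar = bayesRisk S P (fun _ => πstar) πstar := by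
    refine le_antisymm ?_ (bayesRisk_const_le hS hPpos hπstar hδM)
    calc bayesRisk S P δM πstar ≤ minBayesRisk S P πM :=
          bayesRisk_le_of_forall_freqRisk_le hπstar hLF
      _ ≤ minBayesRisk S P πstar := hmax πM hπM
      _ = bayesRisk S P (fun _ => πstar) πstar :=
          minBayesRisk_eq_bayesRisk_const hS hPpos hπstar
  have hfreq : freqRisk S P (fun _ => πstar) = freqRisk S P δM :=
    freqRisk_congr fun x => (post_eq_of_bayesRisk_eq hS hPpos hπstar hδM hδM_bayes x).symm
  have hLFstar : ∀ θ, freqRisk S P (fun _ => πstar) θ ≤ minBayesRisk S P πstar := fun θ => by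
    rw [hfreq]
    exact (hLF θ).trans (hmax πM hπM)
  exact ⟨hLFstar, iSup_freqRisk_eq_sInf_of_freqRisk_le_minBayesRisk hS hPpos hπstar
    (fun _ => hπstar) hLFstar⟩

/-- If `π^M` is least favorable for the prior disclosure game (with Bayes rule
`δ^M`) and a Bayesimax prior exists, then every Bayesimax prior `π*` is least favorable, and
the constant rule `δ*(x) ≡ π*` is minimax:
`sup_θ ℛ_S(δ*, θ) = inf_δ sup_θ ℛ_S(δ, θ)`. -/
theorem bayesimax_is_least_favorable_and_minimax
    {Ω 𝒳 : Type*} [Fintype Ω] [Fintype 𝒳] [Nonempty Ω]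
    (S : (Ω → ℝ) → Ω → ℝ) (hS : StrictlyProper S)
    (P : Ω → 𝒳 → ℝ) (hP : ∀ θ, IsPMF (P θ)) (hPpos : ∀ θ x, 0 < P θ x)
    (πM : Ω → ℝ) (hπM : IsPMF πM)
    (δM : 𝒳 → Ω → ℝ) (hδM : ∀ x, IsPMF (δM x))
    (hBayes : bayesRisk S P δM πM = minBayesRisk S P πM)
    (hLF : ∀ θ, freqRisk S P δM θ ≤ minBayesRisk S P πM)
    (πstar : Ω → ℝ) (hπstar : IsPMF πstar)
    (hmax : ∀ π : Ω → ℝ, IsPMF π → minBayesRisk S P π ≤ minBayesRisk S P πstar) :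
    (∀ θ, freqRisk S P (fun _ => πstar) θ ≤ minBayesRisk S P πstar) ∧
      (⨆ θ, freqRisk S P (fun _ => πstar) θ)
        = sInf {v | ∃ δ : 𝒳 → Ω → ℝ, (∀ x, IsPMF (δ x)) ∧
            v = ⨆ θ, freqRisk S P δ θ} :=
  bayesimax_is_least_favorable_and_minimax_general S hS P hPpos πM hπM δM hδM hLF πstar hπstar hmax
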